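/- Assume n ≥ 2, M_{{1}} ≤ M_{{2}}, min_{x∈Δ_m} u^L(x,2) < M_{{1}}, and that there are a_2 ∈ ℝ^m, γ_2 > 0, β_2 ∈ ℝ with u^L(x,2) = γ_2·(a_2·x) + β_2 for all x ∈ Δ_m. Set d* = (M_{{1,2}} − β_2)/γ_2. For d ∈ ℝ define the follower payoff ũ_d^F(x,j) = −1 for j ∉ {1,2}, ũ_d^F(x,1) = 0, and ũ_d^F(x,2) = d − a_2·x, and let 𝒢_d = (u^L, ũ_d^F). Then action 1 is an SSE response of 𝒢_d if and only if d ≤ d*, and action 2 is an SSE response of 𝒢_d if and only if d ≥ d*. -/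

import Mathlib

/-!
The follower of `𝒢_d` answers `1` where `a₂·x ≥ d` and `2` where `a₂·x ≤ d`, that is, according
as `u^L(x,2)` lies above or below `c = γ₂ d + β₂`; and `d ≤ d*` means `c ≤ M_{1,2}`.
By concavity of payoffs, mixing a point where `u^L(·,1) > r` and `u^L(·,2) ≥ r` with a little of
a point where `u^L(·,2) > r` gives a point where both exceed `r`, so `r < M_{1,2}`. Hence
`u^L(x,2) ≥ M_{1,2}` forces `u^L(x,1) ≤ M_{1,2}` (as `M_1 ≤ M_2`), and `u^L(·,2) < M_{1,2}`
somewhere (as `min u^L(·,2) < M_1`). So for `c ≤ M_{1,2}` the leader gets at least `M_{1,2}` by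
inducing `1` but at most `c` by inducing `2`; for `c ≥ M_{1,2}` she gets at least `M_{1,2}` by
inducing `2` (where `u^L(·,2) = M_{1,2}`, by the intermediate value theorem) but at most `M_{1,2}`
by inducing `1`. The strict inequalities rule out the other response.
-/

open scoped Classical
open Finset

noncomputable section

/-- The leader's mixed-strategy simplex Δ_m. -/
def simplex (m : ℕ) : Set (Fin m → ℝ) := stdSimplex ℝ (Fin m)

/-- Linear extension of a payoff matrix to mixed strategies: u(x,j) = ∑ i, x i * u i j. -/
def pay {m n : ℕ} (u : Fin m → Fin n → ℝ) (x : Fin m → ℝ) (j : Fin n) : ℝ :=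
  ∑ i, x i * u i j

/-- Inner product on ℝ^m. -/
def dot {m : ℕ} (a x : Fin m → ℝ) : ℝ := ∑ i, a i * x i

/-- min_{j ∈ S} u(x, j). -/
def minOnS {m n : ℕ} (u : Fin m → Fin n → ℝ) (S : Set (Fin n)) (x : Fin m → ℝ) : ℝ :=
  sInf ((fun j => pay u x j) '' S)

/-- The leader's maximin value M_S = max_{x∈Δ_m} min_{j∈S} u(x,j). -/
def Mval {m n : ℕ} (u : Fin m → Fin n → ℝ) (S : Set (Fin n)) : ℝ :=
  sSup (minOnS u S '' simplex m)

/-- The set 𝓜_S of maximin strategies. -/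
def argMM {m n : ℕ} (u : Fin m → Fin n → ℝ) (S : Set (Fin n)) : Set (Fin m → ℝ) :=
  {x ∈ simplex m | minOnS u S x = Mval u S}

/-- The follower's best-response set BR(x) = argmax_j uF(x,j). -/
def BR {m n : ℕ} (uF : Fin m → Fin n → ℝ) (x : Fin m → ℝ) : Set (Fin n) :=
  {j | ∀ j', pay uF x j' ≤ pay uF x j}

/-- Strong Stackelberg equilibrium of the game (uL, uF). -/
def SSE {m n : ℕ} (uL uF : Fin m → Fin n → ℝ) (x : Fin m → ℝ) (j : Fin n) : Prop :=
  x ∈ simplex m ∧ j ∈ BR uF x ∧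
    ∀ x' ∈ simplex m, ∀ j' ∈ BR uF x', pay uL x' j' ≤ pay uL x j

/-- (x, j) is inducible with respect to the leader payoff uL. -/
def Inducible {m n : ℕ} (uL : Fin m → Fin n → ℝ) (x : Fin m → ℝ) (j : Fin n) : Prop :=
  ∃ uF : Fin m → Fin n → ℝ, SSE uL uF x j

/-- μ is a (maximin-)cover of S w.r.t. uL: max_{x∈𝓜_S} max_{j∈BR(x)} uL(x,j) < M_S. -/
def IsCover {m n : ℕ} (uL μ : Fin m → Fin n → ℝ) (S : Set (Fin n)) : Prop :=
  ∀ x ∈ argMM uL S, ∀ j ∈ BR μ x, pay uL x j < Mval uL S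

/-- μ is a proper cover of S w.r.t. uL. -/
def IsProperCover {m n : ℕ} (uL μ : Fin m → Fin n → ℝ) (S : Set (Fin n)) : Prop :=
  IsCover uL μ S ∧ ∀ x ∈ simplex m, ∀ j ∈ S, j ∉ BR μ x

/-- The parameterized follower payoff ũ_d^F: 0 on column 1, d − a_2·x on column 2, −1
elsewhere (as a matrix; the linear extension agrees on Δ_m). -/
def uFd {m n : ℕ} (j1 j2 : Fin n) (a2 : Fin m → ℝ) (d : ℝ) : Fin m → Fin n → ℝ :=
  fun i j => if j = j1 then 0 else if j = j2 then d - a2 i else -1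

/-- j is an SSE response of the game (uL, uF). -/
def SSEResp {m n : ℕ} (uL uF : Fin m → Fin n → ℝ) (j : Fin n) : Prop :=
  ∃ x : Fin m → ℝ, SSE uL uF x j

open Filter Topology Set

theorem ConcaveOn.exists_lt_and_lt {E : Type*} [AddCommGroup E] [Module ℝ E] {s : Set E}
    {f g : E → ℝ} (hf : ConcaveOn ℝ s f) (hg : ConcaveOn ℝ s g) {x y : E} (hx : x ∈ s)
    (hy : y ∈ s) {r : ℝ} (hfx : r < f x) (hgx : r ≤ g x) (hgy : r < g y) :
    ∃ z ∈ s, r < f z ∧ r < g z := by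
  have hlim : Tendsto (fun t : ℝ => (1 - t) * f x + t * f y) (𝓝[>] 0) (𝓝 (f x)) :=
    ((by fun_prop : Continuous fun t : ℝ => (1 - t) * f x + t * f y).tendsto' 0 _
      (by simp)).mono_left nhdsWithin_le_nhds
  obtain ⟨t, hft, ht0, ht1⟩ :=
    ((hlim.eventually (lt_mem_nhds hfx)).and (Ioo_mem_nhdsGT one_pos)).exists
  have h1t : 0 ≤ 1 - t := sub_nonneg.2 ht1.le
  have hsum : 1 - t + t = 1 := sub_add_cancel 1 t
  refine ⟨(1 - t) • x + t • y, hf.1 hx hy h1t ht0.le hsum, ?_, ?_⟩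
  · exact hft.trans_le (hf.2 hx hy h1t ht0.le hsum)
  · refine lt_of_lt_of_le ?_ (hg.2 hx hy h1t ht0.le hsum)
    simp only [smul_eq_mul]
    nlinarith

section Simplex

variable {m n : ℕ}

theorem isCompact_simplex : IsCompact (simplex m) := isCompact_stdSimplex ℝ (Fin m)

theorem convex_simplex : Convex ℝ (simplex m) := convex_stdSimplex ℝ (Fin m)

theorem simplex_nonempty [NeZero m] : (simplex m).Nonempty :=
  ⟨Pi.single 0 1, single_mem_stdSimplex ℝ 0⟩

theorem continuous_pay (u : Fin m → Fin n → ℝ) (j : Fin n) :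
    Continuous fun x : Fin m → ℝ => pay u x j := by
  unfold pay
  fun_prop

theorem pay_add_smul (u : Fin m → Fin n → ℝ) (x y : Fin m → ℝ) (a b : ℝ) (j : Fin n) :
    pay u (a • x + b • y) j = a * pay u x j + b * pay u y j := by
  simp [pay, Finset.mul_sum, add_mul, mul_assoc, Finset.sum_add_distrib]

theorem concaveOn_pay (u : Fin m → Fin n → ℝ) (j : Fin n) :
    ConcaveOn ℝ (simplex m) fun x => pay u x j :=
  ⟨convex_simplex, fun x _ y _ a b _ _ _ => (pay_add_smul u x y a b j).ge⟩

theorem exists_pay_eq {u : Fin m → Fin n → ℝ} {j : Fin n} {x y : Fin m → ℝ}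
    (hx : x ∈ simplex m) (hy : y ∈ simplex m) {v : ℝ} (hv : v ∈ Icc (pay u x j) (pay u y j)) :
    ∃ z ∈ simplex m, pay u z j = v :=
  convex_simplex.isPreconnected.intermediate_value hx hy (continuous_pay u j).continuousOn hv

theorem exists_isMaxOn_pay_inter (u : Fin m → Fin n → ℝ) (j : Fin n) {t : Set (Fin m → ℝ)}
    (ht : IsClosed t) (hne : (simplex m ∩ t).Nonempty) :
    ∃ x ∈ simplex m ∩ t, IsMaxOn (fun x => pay u x j) (simplex m ∩ t) x :=
  (isCompact_simplex.inter_right ht).exists_isMaxOn hne (continuous_pay u j).continuousOn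

end Simplex

section Maximin

variable {m n : ℕ} (u : Fin m → Fin n → ℝ)

theorem Mval_singleton (j : Fin n) :
    Mval u {j} = sSup ((fun x => pay u x j) '' simplex m) := by
  have : minOnS u {j} = fun x => pay u x j := funext fun x => by simp [minOnS]
  rw [Mval, this]

theorem Mval_pair (j₁ j₂ : Fin n) :
    Mval u {j₁, j₂} = sSup ((fun x => min (pay u x j₁) (pay u x j₂)) '' simplex m) := by
  have : minOnS u {j₁, j₂} = fun x => min (pay u x j₁) (pay u x j₂) :=
    funext fun x => by rw [minOnS, image_pair, csInf_pair]
  rw [Mval, this]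

theorem pay_le_Mval_singleton {j : Fin n} {x : Fin m → ℝ} (hx : x ∈ simplex m) :
    pay u x j ≤ Mval u {j} := by
  rw [Mval_singleton]
  exact le_csSup (isCompact_simplex.bddAbove_image (continuous_pay u j).continuousOn)
    (mem_image_of_mem _ hx)

theorem exists_lt_pay_of_lt_Mval_singleton [NeZero m] {j : Fin n} {r : ℝ}
    (h : r < Mval u {j}) : ∃ x ∈ simplex m, r < pay u x j := by
  rw [Mval_singleton] at h
  obtain ⟨_, ⟨x, hx, rfl⟩, hr⟩ := exists_lt_of_lt_csSup (simplex_nonempty.image _) h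
  exact ⟨x, hx, hr⟩

theorem min_pay_le_Mval_pair {j₁ j₂ : Fin n} {x : Fin m → ℝ} (hx : x ∈ simplex m) :
    min (pay u x j₁) (pay u x j₂) ≤ Mval u {j₁, j₂} := by
  rw [Mval_pair]
  exact le_csSup (isCompact_simplex.bddAbove_image
    ((continuous_pay u j₁).min (continuous_pay u j₂)).continuousOn) (mem_image_of_mem _ hx)

theorem exists_Mval_pair_le [NeZero m] (j₁ j₂ : Fin n) :
    ∃ x ∈ simplex m, Mval u {j₁, j₂} ≤ pay u x j₁ ∧ Mval u {j₁, j₂} ≤ pay u x j₂ := by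
  obtain ⟨x, hx, hxM, -⟩ := isCompact_simplex.exists_sSup_image_eq_and_ge simplex_nonempty
    ((continuous_pay u j₁).min (continuous_pay u j₂)).continuousOn
  exact ⟨x, hx, le_min_iff.1 (by rw [Mval_pair, hxM])⟩

theorem lt_Mval_pair {j₁ j₂ : Fin n} {x y : Fin m → ℝ} (hx : x ∈ simplex m)
    (hy : y ∈ simplex m) {r : ℝ} (h₁x : r < pay u x j₁) (h₂x : r ≤ pay u x j₂)
    (h₂y : r < pay u y j₂) : r < Mval u {j₁, j₂} := by
  obtain ⟨z, hz, h₁z, h₂z⟩ :=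
    (concaveOn_pay u j₁).exists_lt_and_lt (concaveOn_pay u j₂) hx hy h₁x h₂x h₂y
  exact (lt_min h₁z h₂z).trans_le (min_pay_le_Mval_pair u hz)

variable [NeZero m] {j₁ j₂ : Fin n}

theorem pay_le_Mval_pair_of_Mval_pair_le (hM : Mval u {j₁} ≤ Mval u {j₂}) {x : Fin m → ℝ}
    (hx : x ∈ simplex m)
    (h₂ : Mval u {j₁, j₂} ≤ pay u x j₂) : pay u x j₁ ≤ Mval u {j₁, j₂} := by
  by_contra! h₁
  obtain ⟨y, hy, h₂y⟩ := exists_lt_pay_of_lt_Mval_singleton u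
    (h₁.trans_le ((pay_le_Mval_singleton u hx).trans hM))
  exact (lt_Mval_pair u hx hy h₁ h₂ h₂y).false

theorem exists_pay_lt_Mval_pair (hM : Mval u {j₁} ≤ Mval u {j₂})
    (hmin : sInf ((fun x => pay u x j₂) '' simplex m) < Mval u {j₁}) :
    ∃ x ∈ simplex m, pay u x j₂ < Mval u {j₁, j₂} := by
  obtain ⟨x₀, hx₀, hx₀min, hx₀le⟩ :=
    isCompact_simplex.exists_sInf_image_eq_and_le simplex_nonempty
      (continuous_pay u j₂).continuousOn
  rw [hx₀min] at hmin
  obtain ⟨x, hx, h₁x⟩ := exists_lt_pay_of_lt_Mval_singleton u hmin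
  obtain ⟨y, hy, h₂y⟩ := exists_lt_pay_of_lt_Mval_singleton u (hmin.trans_le hM)
  exact ⟨x₀, hx₀, lt_Mval_pair u hx hy h₁x (hx₀le x hx) h₂y⟩

end Maximin

section Threshold

variable {m n : ℕ}

def RespondsByThreshold (uL uF : Fin m → Fin n → ℝ) (j₁ j₂ : Fin n) (c : ℝ) : Prop :=
  ∀ x ∈ simplex m, (j₁ ∈ BR uF x ↔ c ≤ pay uL x j₂) ∧ (j₂ ∈ BR uF x ↔ pay uL x j₂ ≤ c) ∧
    ∀ j ∈ BR uF x, j = j₁ ∨ j = j₂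

variable [NeZero m] {uL uF : Fin m → Fin n → ℝ} {j₁ j₂ : Fin n} {c : ℝ}

theorem RespondsByThreshold.sseResp_left (hR : RespondsByThreshold uL uF j₁ j₂ c)
    (hc : c ≤ Mval uL {j₁, j₂}) : SSEResp uL uF j₁ := by
  obtain ⟨xs, hxs, h₁xs, h₂xs⟩ := exists_Mval_pair_le uL j₁ j₂
  obtain ⟨x, ⟨hx, hcx⟩, hmax⟩ := exists_isMaxOn_pay_inter uL j₁
    (isClosed_le continuous_const (continuous_pay uL j₂)) ⟨xs, hxs, hc.trans h₂xs⟩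
  refine ⟨x, hx, (hR x hx).1.2 hcx, fun x' hx' j' hj' => ?_⟩
  rcases (hR x' hx').2.2 j' hj' with rfl | rfl
  · exact hmax ⟨hx', (hR x' hx').1.1 hj'⟩
  · calc pay uL x' j' ≤ c := (hR x' hx').2.1.1 hj'
      _ ≤ pay uL xs j₁ := hc.trans h₁xs
      _ ≤ pay uL x j₁ := hmax ⟨hxs, hc.trans h₂xs⟩

theorem RespondsByThreshold.le_of_sseResp_left (hR : RespondsByThreshold uL uF j₁ j₂ c)
    (hM : Mval uL {j₁} ≤ Mval uL {j₂})
    (hmin : sInf ((fun x => pay uL x j₂) '' simplex m) < Mval uL {j₁})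
    (h : SSEResp uL uF j₁) : c ≤ Mval uL {j₁, j₂} := by
  obtain ⟨x, hx, hxBR, hopt⟩ := h
  by_contra! hc
  have hcx : c ≤ pay uL x j₂ := (hR x hx).1.1 hxBR
  obtain ⟨x₀, hx₀, h₂x₀⟩ := exists_pay_lt_Mval_pair uL hM hmin
  obtain ⟨z, hz, h₂z⟩ := exists_pay_eq hx₀ hx ⟨(h₂x₀.trans hc).le, hcx⟩
  have h₁x := pay_le_Mval_pair_of_Mval_pair_le uL hM hx (hc.le.trans hcx)
  have := hopt z hz j₂ ((hR z hz).2.1.2 h₂z.le)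
  linarith

theorem RespondsByThreshold.sseResp_right (hR : RespondsByThreshold uL uF j₁ j₂ c)
    (hM : Mval uL {j₁} ≤ Mval uL {j₂})
    (hmin : sInf ((fun x => pay uL x j₂) '' simplex m) < Mval uL {j₁})
    (hc : Mval uL {j₁, j₂} ≤ c) : SSEResp uL uF j₂ := by
  obtain ⟨x₀, hx₀, h₂x₀⟩ := exists_pay_lt_Mval_pair uL hM hmin
  obtain ⟨xs, hxs, -, h₂xs⟩ := exists_Mval_pair_le uL j₁ j₂
  obtain ⟨z, hz, h₂z⟩ := exists_pay_eq hx₀ hxs ⟨h₂x₀.le, h₂xs⟩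
  obtain ⟨x, ⟨hx, hxc⟩, hmax⟩ := exists_isMaxOn_pay_inter uL j₂
    (isClosed_le (continuous_pay uL j₂) continuous_const) ⟨z, hz, h₂z.trans_le hc⟩
  have hMx : Mval uL {j₁, j₂} ≤ pay uL x j₂ := h₂z ▸ hmax ⟨hz, h₂z.trans_le hc⟩
  refine ⟨x, hx, (hR x hx).2.1.2 hxc, fun x' hx' j' hj' => ?_⟩
  rcases (hR x' hx').2.2 j' hj' with rfl | rfl
  · exact (pay_le_Mval_pair_of_Mval_pair_le uL hM hx'
      (hc.trans ((hR x' hx').1.1 hj'))).trans hMx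
  · exact hmax ⟨hx', (hR x' hx').2.1.1 hj'⟩

theorem RespondsByThreshold.le_of_sseResp_right (hR : RespondsByThreshold uL uF j₁ j₂ c)
    (h : SSEResp uL uF j₂) : Mval uL {j₁, j₂} ≤ c := by
  obtain ⟨x, hx, hxBR, hopt⟩ := h
  by_contra! hc
  obtain ⟨xs, hxs, h₁xs, h₂xs⟩ := exists_Mval_pair_le uL j₁ j₂
  have := hopt xs hxs j₁ ((hR xs hxs).1.2 (hc.le.trans h₂xs))
  have := (hR x hx).2.1.1 hxBR
  linarith

end Threshold

section ThresholdGame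

variable {m n : ℕ} {j₁ j₂ : Fin n} {a : Fin m → ℝ} {d : ℝ}

theorem pay_uFd {x : Fin m → ℝ} (hx : x ∈ simplex m) :
    pay (uFd j₁ j₂ a d) x = fun j => if j = j₁ then 0 else if j = j₂ then d - dot a x else -1 := by
  funext j
  simp only [pay, uFd]
  split_ifs <;> simp [mul_sub, Finset.sum_sub_distrib, ← Finset.mul_sum, hx.2, dot,
    mul_comm]

theorem respondsByThreshold_uFd {uL : Fin m → Fin n → ℝ} (hj : j₁ ≠ j₂) {γ β : ℝ} (hγ : 0 < γ)
    (ha : ∀ x ∈ simplex m, pay uL x j₂ = γ * dot a x + β) :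
    RespondsByThreshold uL (uFd j₁ j₂ a d) j₁ j₂ (γ * d + β) := by
  intro x hx
  have hBR (j : Fin n) : j ∈ BR (uFd j₁ j₂ a d) x ↔ ∀ j', pay (uFd j₁ j₂ a d) x j' ≤
      pay (uFd j₁ j₂ a d) x j := Iff.rfl
  have hd_le : d ≤ dot a x ↔ γ * d + β ≤ pay uL x j₂ := by
    rw [ha x hx, add_le_add_iff_right, mul_le_mul_iff_of_pos_left hγ]
  have hle_d : dot a x ≤ d ↔ pay uL x j₂ ≤ γ * d + β := by
    rw [ha x hx, add_le_add_iff_right, mul_le_mul_iff_of_pos_left hγ]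
  simp only [hBR, pay_uFd hx, ← hd_le, ← hle_d, hj.symm, ↓reduceIte]
  refine ⟨⟨fun h => ?_, fun h j' => ?_⟩, ⟨fun h => ?_, fun h j' => ?_⟩, fun j h => ?_⟩
  · simpa [hj.symm] using h j₂
  · split_ifs <;> linarith
  · simpa [hj.symm] using h j₁
  · split_ifs <;> linarith
  · by_contra! hne
    have := h j₁
    norm_num [hne.1, hne.2] at this

end ThresholdGame

/-- action 1 is an SSE response of 𝒢_d iff d ≤ d*, and action 2 is an SSE
response of 𝒢_d iff d ≥ d*, where d* = (M_{1,2} − β_2)/γ_2. -/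
theorem fd_sse_responses {m n : ℕ} (hm : 0 < m)
    (uL : Fin m → Fin n → ℝ) (j1 j2 : Fin n) (hj : j1 ≠ j2)
    (hM : Mval uL {j1} ≤ Mval uL {j2})
    (hmin : sInf ((fun x => pay uL x j2) '' simplex m) < Mval uL {j1})
    (a2 : Fin m → ℝ) (γ2 : ℝ) (hγ2 : 0 < γ2) (β2 : ℝ)
    (ha2 : ∀ x ∈ simplex m, pay uL x j2 = γ2 * dot a2 x + β2)
    (d : ℝ) :
    (SSEResp uL (uFd j1 j2 a2 d) j1 ↔ d ≤ (Mval uL {j1, j2} - β2) / γ2) ∧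
    (SSEResp uL (uFd j1 j2 a2 d) j2 ↔ (Mval uL {j1, j2} - β2) / γ2 ≤ d) := by
  have := NeZero.of_pos hm
  have hR := respondsByThreshold_uFd (d := d) hj hγ2 ha2
  rw [le_div_iff₀ hγ2, div_le_iff₀ hγ2]
  refine ⟨⟨fun h => ?_, fun h => hR.sseResp_left ?_⟩,
    ⟨fun h => ?_, fun h => hR.sseResp_right hM hmin ?_⟩⟩
  · linarith [hR.le_of_sseResp_left hM hmin h]
  · linarith
  · linarith [hR.le_of_sseResp_right h]
  · linarith
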